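/- Let τ > 0, μ ∈ ℝ, i ∈ {1,2}, let v(s) = (2/√τ)·( (−2μ/√τ)·(1 − cos(√τ·s)) + (−1)^i·sin(√τ·s) ), and s_i its first positive zero. Then for all s ∈ (0, s_i), 4·v(s)² + v'(s)² > 0, and the function s ↦ 2·(−1)^i·v(s)/√(4·v(s)² + v'(s)²) takes values in (0, 1] and tends to 0 as s → 0⁺ and as s → s_i⁻. -/

import Mathlib

/-!
With `c = (-1)^i` we have `v(0) = 0` and `v'(0) = 2c`, so `c v` leaves `0` with slope `2`; having
no zero on `(0, s_i)`, it stays positive there by the intermediate value theorem. This gives the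
sign of the ratio, and `u / √(u² + y²) ≤ 1` its upper bound. At `s_i`, eliminating between
`v = 0` and `v' = 0` gives `c (1 - cos (√τ s_i)) = 0`, impossible for `0 < √τ s_i < 2π`. Hence the
denominator does not vanish at either end of the interval, and the ratio tends to `0` there
together with `v`.
-/

open Real Set Filter Topology

theorem pos_of_hasDerivWithinAt_of_forall_ne_zero {f : ℝ → ℝ} {a b d : ℝ}
    (hf : ContinuousOn f (Ioo a b)) (hfa : f a = 0) (hd : HasDerivWithinAt f d (Ioi a) a)
    (hd0 : 0 < d) (hne : ∀ x ∈ Ioo a b, f x ≠ 0) : ∀ x ∈ Ioo a b, 0 < f x := by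
  intro x hx
  by_contra! hfx
  have hslope := (hasDerivWithinAt_iff_tendsto_slope' (lt_irrefl a)).mp hd
  have hnhds : 𝓝[Ioo a b] a = 𝓝[>] a := nhdsWithin_Ioo_eq_nhdsGT (hx.1.trans hx.2)
  have : (𝓝[Ioo a b] a).NeBot := hnhds ▸ inferInstance
  have hright : ∀ᶠ y in 𝓝[Ioo a b] a, 0 ≤ f y := by
    rw [hnhds]
    filter_upwards [hslope.eventually (eventually_gt_nhds hd0), self_mem_nhdsWithin]
      with y hy hya
    exact (pos_of_slope_pos hya hy hfa).le
  obtain ⟨y, hy, hfy⟩ := isPreconnected_Ioo.intermediate_value₂_eventually₁ hx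
    (l := 𝓝[Ioo a b] a) inf_le_right hf continuousOn_const hfx hright
  exact hne y hy hfy

theorem div_sqrt_sq_add_sq_mem_Ioc {u : ℝ} (y : ℝ) (hu : 0 < u) :
    u / √(u ^ 2 + y ^ 2) ∈ Ioc 0 1 := by
  have hroot : u ≤ √(u ^ 2 + y ^ 2) :=
    le_sqrt_of_sq_le (le_add_of_nonneg_right (sq_nonneg y))
  exact ⟨by positivity, (div_le_one (hu.trans_le hroot)).mpr hroot⟩

theorem tendsto_mul_div_sqrt_of_eq_zero {f g : ℝ → ℝ} {x : ℝ} (k : ℝ) (hf : ContinuousAt f x)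
    (hg : ContinuousAt g x) (hfx : f x = 0) (hgx : g x ≠ 0) :
    Tendsto (fun s => k * f s / √(4 * f s ^ 2 + g s ^ 2)) (𝓝 x) (𝓝 0) := by
  have hden : √(4 * f x ^ 2 + g x ^ 2) ≠ 0 := by
    rw [hfx]; positivity
  have hcont : ContinuousAt (fun s => k * f s / √(4 * f s ^ 2 + g s ^ 2)) x :=
    (continuousAt_const.mul hf).div (by fun_prop) hden
  simpa [hfx] using hcont.tendsto

-- The function `v` of the statement is `profile √τ (-2μ/√τ) (-1)^i`.
noncomputable def profile (ω a c s : ℝ) : ℝ := 2 / ω * (a * (1 - cos (ω * s)) + c * sin (ω * s))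

section profile

variable {ω a c : ℝ}

theorem hasDerivAt_profile (hω : ω ≠ 0) (s : ℝ) :
    HasDerivAt (profile ω a c) (2 * (a * sin (ω * s) + c * cos (ω * s))) s := by
  have hlin : HasDerivAt (fun s : ℝ => ω * s) ω s := by
    simpa using (hasDerivAt_id s).const_mul ω
  refine ((((hlin.cos.const_sub 1).const_mul a).add (hlin.sin.const_mul c)).const_mul
    (2 / ω)).congr_deriv ?_
  field_simp

theorem deriv_profile (hω : ω ≠ 0) :
    deriv (profile ω a c) = fun s => 2 * (a * sin (ω * s) + c * cos (ω * s)) :=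
  funext fun s => (hasDerivAt_profile hω s).deriv

theorem continuous_profile : Continuous (profile ω a c) := by
  unfold profile; fun_prop

theorem continuous_deriv_profile (hω : ω ≠ 0) : Continuous (deriv (profile ω a c)) := by
  rw [deriv_profile hω]; fun_prop

theorem profile_zero : profile ω a c 0 = 0 := by simp [profile]

theorem deriv_profile_zero (hω : ω ≠ 0) : deriv (profile ω a c) 0 = 2 * c := by
  simp [deriv_profile hω]

theorem cos_eq_one_of_profile_eq_zero_of_deriv_eq_zero (hω : ω ≠ 0) (hc : c ≠ 0)
    {s : ℝ} (hv : profile ω a c s = 0) (hv' : deriv (profile ω a c) s = 0) :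
    cos (ω * s) = 1 := by
  rw [deriv_profile hω] at hv'
  have e1 : a * (1 - cos (ω * s)) + c * sin (ω * s) = 0 :=
    (mul_eq_zero.mp hv).resolve_left (by positivity)
  have e2 : a * sin (ω * s) + c * cos (ω * s) = 0 := by linarith
  have hkey : c * (1 - cos (ω * s)) = 0 := by
    linear_combination sin (ω * s) * e1 - (1 - cos (ω * s)) * e2 - c * sin_sq_add_cos_sq (ω * s)
  linarith [(mul_eq_zero.mp hkey).resolve_left hc]

theorem deriv_profile_ne_zero_of_profile_eq_zero (hω : 0 < ω) (hc : c ≠ 0) {s : ℝ}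
    (hs : s ∈ Ioo 0 (2 * π / ω)) (hv : profile ω a c s = 0) :
    deriv (profile ω a c) s ≠ 0 := by
  intro hv'
  have hθ : ω * s < 2 * π := (lt_div_iff₀' hω).mp hs.2
  have hcos := cos_eq_one_of_profile_eq_zero_of_deriv_eq_zero hω.ne' hc hv hv'
  rw [cos_eq_one_iff_of_lt_of_lt (by nlinarith [pi_pos, mul_pos hω hs.1]) hθ] at hcos
  exact (mul_pos hω hs.1).ne' hcos

end profile

theorem stmt_18 (τ μ : ℝ) (hτ : 0 < τ) (i : ℕ) (hi : i = 1 ∨ i = 2) (v : ℝ → ℝ)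
    (hv : ∀ s : ℝ, v s = (2 / Real.sqrt τ) *
      ((-2 * μ / Real.sqrt τ) * (1 - Real.cos (Real.sqrt τ * s))
        + (-1 : ℝ) ^ i * Real.sin (Real.sqrt τ * s)))
    (si : ℝ) (hsi : si ∈ Set.Ioo 0 (2 * π / Real.sqrt τ)) (hz : v si = 0)
    (hfirst : ∀ s ∈ Set.Ioo 0 si, v s ≠ 0) :
    (∀ s ∈ Set.Ioo 0 si, 0 < 4 * v s ^ 2 + (deriv v s) ^ 2) ∧
    (∀ s ∈ Set.Ioo 0 si,
        2 * (-1 : ℝ) ^ i * v s / Real.sqrt (4 * v s ^ 2 + (deriv v s) ^ 2)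
          ∈ Set.Ioc (0:ℝ) 1) ∧
    Filter.Tendsto
      (fun s => 2 * (-1 : ℝ) ^ i * v s / Real.sqrt (4 * v s ^ 2 + (deriv v s) ^ 2))
      (nhdsWithin 0 (Set.Ioi 0)) (nhds 0) ∧
    Filter.Tendsto
      (fun s => 2 * (-1 : ℝ) ^ i * v s / Real.sqrt (4 * v s ^ 2 + (deriv v s) ^ 2))
      (nhdsWithin si (Set.Iio si)) (nhds 0) := by
  set ω := √τ
  have hω : 0 < ω := sqrt_pos.mpr hτ
  set a := -2 * μ / ω
  set c : ℝ := (-1) ^ i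
  have hc2 : c ^ 2 = 1 := by rcases hi with rfl | rfl <;> norm_num [c]
  have hc : c ≠ 0 := by rintro h; simp [h] at hc2
  obtain rfl : v = profile ω a c := funext hv
  have hcv : ∀ s ∈ Ioo 0 si, 0 < c * profile ω a c s := by
    refine pos_of_hasDerivWithinAt_of_forall_ne_zero
      (continuous_const.mul continuous_profile).continuousOn
      (by simp [profile_zero]) ?_ two_pos fun s hs => mul_ne_zero hc (hfirst s hs)
    refine (((hasDerivAt_profile hω.ne' 0).const_mul c).congr_deriv ?_).hasDerivWithinAt
    simp only [mul_zero, sin_zero, cos_zero]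
    linear_combination 2 * hc2
  have hsq : ∀ s, 4 * profile ω a c s ^ 2 = (2 * c * profile ω a c s) ^ 2 := fun s => by
    linear_combination -4 * profile ω a c s ^ 2 * hc2
  have hlim : ∀ x, profile ω a c x = 0 → deriv (profile ω a c) x ≠ 0 →
      Tendsto (fun s => 2 * c * profile ω a c s /
        √(4 * profile ω a c s ^ 2 + deriv (profile ω a c) s ^ 2)) (𝓝 x) (𝓝 0) :=
    fun x hvx hv'x => tendsto_mul_div_sqrt_of_eq_zero _ continuous_profile.continuousAt
      (continuous_deriv_profile hω.ne').continuousAt hvx hv'x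
  refine ⟨fun s hs => ?_, fun s hs => ?_, ?_, ?_⟩
  · have := hfirst s hs
    positivity
  · rw [hsq, mul_assoc]
    exact div_sqrt_sq_add_sq_mem_Ioc _ (by linarith [hcv s hs])
  · refine (hlim 0 profile_zero ?_).mono_left nhdsWithin_le_nhds
    rw [deriv_profile_zero hω.ne']
    exact mul_ne_zero two_ne_zero hc
  · exact (hlim si hz (deriv_profile_ne_zero_of_profile_eq_zero hω hc hsi hz)).mono_left
      nhdsWithin_le_nhds
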